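/- arXiv:math/9209221 — 4 statements merged into one kernel-verified Lean document; each statement's English description precedes it below -/
import Mathlib

section
/- For η ≠ 0, the locus Per₁(η) in the (σ₁, σ₂)-plane is the straight line σ₂ = (η + η⁻¹)σ₁ − (η² + 2η⁻¹); that is, μ₁, μ₂, μ₃ ∈ ℂ satisfying σ₃ = σ₁ − 2 include η among them if and only if σ₂ = (η + η⁻¹)σ₁ − (η² + 2η⁻¹), where σᵢ denotes the i-th elementary symmetric function of μ₁, μ₂, μ₃. -/
/-- For η ≠ 0, the locus Per₁(η) is the line σ₂ = (η+η⁻¹)σ₁ − (η²+2η⁻¹):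
multipliers μ₁, μ₂, μ₃ satisfying σ₃ = σ₁ − 2 include η among them iff the
elementary symmetric functions satisfy this linear relation. -/
theorem per_one_line (η : ℂ) (hη : η ≠ 0) (μ₁ μ₂ μ₃ : ℂ)
    (hrel : μ₁ * μ₂ * μ₃ = (μ₁ + μ₂ + μ₃) - 2) :
    (η = μ₁ ∨ η = μ₂ ∨ η = μ₃) ↔
      μ₁ * μ₂ + μ₁ * μ₃ + μ₂ * μ₃
        = (η + η⁻¹) * (μ₁ + μ₂ + μ₃) - (η ^ 2 + 2 * η⁻¹) := by
  constructor
  · rintro (rfl | rfl | rfl) <;> field_simp <;> linear_combination hrel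
  · intro h
    have key : (η - μ₁) * ((η - μ₂) * (η - μ₃)) = 0 := by
      field_simp at h
      linear_combination h - hrel
    rcases mul_eq_zero.1 key with h1 | h2
    · exact Or.inl (sub_eq_zero.1 h1)
    · rcases mul_eq_zero.1 h2 with h2 | h3
      · exact Or.inr (Or.inl (sub_eq_zero.1 h2))
      · exact Or.inr (Or.inr (sub_eq_zero.1 h3))
end

section
/- If a quadratic rational map has a fixed point of multiplier −1, then it has no periodic orbit of period exactly 2. -/
open Polynomial in
private lemma deg2_decomp (p : Polynomial ℂ) (h : p.natDegree ≤ 2) :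
    p = C (p.coeff 2) * X ^ 2 + C (p.coeff 1) * X + C (p.coeff 0) := by
  ext n
  rcases n with _ | _ | _ | n
  · simp
  · simp
  · simp
  · have h3 : p.natDegree < n + 3 := by omega
    simp [Polynomial.coeff_eq_zero_of_natDegree_lt h3, Polynomial.coeff_X_pow]

open Polynomial in
private lemma only_root_of_double_root (H : Polynomial ℂ) (z₀ : ℂ) (hne : H ≠ 0)
    (hd : H.natDegree ≤ 2)
    (h0 : H.eval z₀ = 0) (h1 : H.derivative.eval z₀ = 0)
    (x : ℂ) (hx : H.eval x = 0) : x = z₀ := by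
  obtain ⟨H1, hH1⟩ := (Polynomial.dvd_iff_isRoot.mpr h0)
  have hder : H.derivative = H1 + (X - C z₀) * H1.derivative := by
    rw [hH1]; simp [Polynomial.derivative_mul]
  have h1' : H1.eval z₀ = 0 := by
    rw [hder] at h1; simpa using h1
  obtain ⟨H2, hH2⟩ := (Polynomial.dvd_iff_isRoot.mpr h1')
  have hfact : H = (X - C z₀) ^ 2 * H2 := by rw [hH1, hH2]; ring
  have hH2ne : H2 ≠ 0 := by
    intro h; rw [h, mul_zero] at hfact; exact hne hfact
  have hdeg2 : ((X - C z₀ : Polynomial ℂ) ^ 2).natDegree = 2 := by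
    simp [Polynomial.natDegree_pow]
  have hdm : H.natDegree = 2 + H2.natDegree := by
    rw [hfact, Polynomial.natDegree_mul (pow_ne_zero 2 (Polynomial.X_sub_C_ne_zero z₀)) hH2ne,
      hdeg2]
  have hH2d : H2.natDegree = 0 := by omega
  obtain ⟨c, hc⟩ := Polynomial.natDegree_eq_zero.mp hH2d
  have hcne : c ≠ 0 := by rintro rfl; simp at hc; exact hH2ne hc.symm
  rw [hfact, ← hc] at hx
  simp at hx
  rcases hx with hx | hx
  · exact sub_eq_zero.mp hx
  · exact absurd hx hcne

open Polynomial in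
/-- A quadratic rational map f = p/q (p, q coprime of maximal degree 2) with a
fixed point z₀ of multiplier −1 has no orbit of period exactly 2: neither a
finite orbit {a, b} ⊂ ℂ, nor an orbit through ∞ (which would require a pole w
with f(∞) = w, i.e. deg p < deg q and w = 0, or deg p = deg q and
w = leadingCoeff p / leadingCoeff q). -/
theorem no_period_two_with_parabolic (p q : Polynomial ℂ)
    (hcop : IsCoprime p q) (hdeg : max p.natDegree q.natDegree = 2)
    (f : ℂ → ℂ) (hf : ∀ z, f z = p.eval z / q.eval z)
    (z₀ : ℂ) (hz₀ : q.eval z₀ ≠ 0) (hfix : f z₀ = z₀)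
    (hmul : deriv f z₀ = -1) :
    (¬ ∃ a b : ℂ, a ≠ b ∧ q.eval a ≠ 0 ∧ q.eval b ≠ 0 ∧ f a = b ∧ f b = a) ∧
    (¬ ∃ w : ℂ, q.eval w = 0 ∧
        ((p.natDegree < q.natDegree ∧ w = 0) ∨
         (p.natDegree = q.natDegree ∧ p.leadingCoeff = w * q.leadingCoeff))) := by
  have hfe : f = fun z => p.eval z / q.eval z := funext hf
  subst hfe
  have hp2 : p.natDegree ≤ 2 := hdeg ▸ le_max_left _ _
  have hq2 : q.natDegree ≤ 2 := hdeg ▸ le_max_right _ _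
  set a2 := p.coeff 2 with ha2
  set a1 := p.coeff 1 with ha1
  set a0 := p.coeff 0 with ha0
  set b2 := q.coeff 2 with hb2
  set b1 := q.coeff 1 with hb1
  set b0 := q.coeff 0 with hb0
  have hp : p = C a2 * X ^ 2 + C a1 * X + C a0 := deg2_decomp p hp2
  have hq : q = C b2 * X ^ 2 + C b1 * X + C b0 := deg2_decomp q hq2
  have hpe : ∀ x : ℂ, p.eval x = a2 * x ^ 2 + a1 * x + a0 := by
    intro x; rw [hp]; simp
  have hqe : ∀ x : ℂ, q.eval x = b2 * x ^ 2 + b1 * x + b0 := by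
    intro x; rw [hq]; simp
  have hdp : p.derivative.eval z₀ = 2 * a2 * z₀ + a1 := by
    rw [hp]; simp; ring
  have hdq : q.derivative.eval z₀ = 2 * b2 * z₀ + b1 := by
    rw [hq]; simp; ring
  -- fixed point equation
  have hPz0 : p.eval z₀ = z₀ * q.eval z₀ := by
    have h := hfix
    simp only at h
    field_simp at h
    linear_combination h
  have hPz : a2 * z₀ ^ 2 + a1 * z₀ + a0 = z₀ * (b2 * z₀ ^ 2 + b1 * z₀ + b0) := by
    rw [← hpe, ← hqe]; exact hPz0
  have hQz : b2 * z₀ ^ 2 + b1 * z₀ + b0 ≠ 0 := by rw [← hqe]; exact hz₀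
  -- multiplier equation
  have hmul' : p.derivative.eval z₀ * q.eval z₀ - p.eval z₀ * q.derivative.eval z₀
      = -(q.eval z₀ ^ 2) := by
    have hd : HasDerivAt (fun z => p.eval z / q.eval z)
        ((p.derivative.eval z₀ * q.eval z₀ - p.eval z₀ * q.derivative.eval z₀)
          / q.eval z₀ ^ 2) z₀ :=
      (p.hasDerivAt z₀).div (q.hasDerivAt z₀) hz₀
    rw [hd.deriv] at hmul
    field_simp at hmul
    linear_combination hmul
  have hmul'' : (2 * a2 * z₀ + a1) * (b2 * z₀ ^ 2 + b1 * z₀ + b0)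
      - (a2 * z₀ ^ 2 + a1 * z₀ + a0) * (2 * b2 * z₀ + b1)
      = -((b2 * z₀ ^ 2 + b1 * z₀ + b0) ^ 2) := by
    rw [← hdp, ← hdq, ← hpe, ← hqe]; exact hmul'
  have hE2 : (2 * a2 * z₀ + a1) - z₀ * (2 * b2 * z₀ + b1)
      + (b2 * z₀ ^ 2 + b1 * z₀ + b0) = 0 := by
    apply mul_left_cancel₀ hQz
    rw [mul_zero]
    linear_combination hmul'' + (2 * b2 * z₀ + b1) * hPz
  -- the key polynomial H and factorization identity
  set H : Polynomial ℂ :=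
    (C a2 - C b2 * X) * (p + X * q) + (C a1 - C b1 * X) * q + q ^ 2 with hHdef
  have hkey : (C a2 - C b2 * X) * p ^ 2 + (C a1 - C b1 * X) * (p * q)
      + (C a0 - C b0 * X) * q ^ 2 = (p - X * q) * H := by
    rw [hHdef, hp, hq]; ring
  -- H has a double root at z₀
  have hHval : H.eval z₀ = 0 := by
    rw [hHdef, hp, hq]
    simp only [eval_add, eval_mul, eval_sub, eval_pow, eval_C, eval_X]
    linear_combination (a2 - b2 * z₀) * hPz + (b2 * z₀ ^ 2 + b1 * z₀ + b0) * hE2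
  have hHder : H.derivative.eval z₀ = 0 := by
    rw [hHdef, hp, hq]
    simp only [derivative_add, derivative_mul, derivative_sub, derivative_pow, derivative_C,
      derivative_X, eval_add, eval_mul, eval_sub, eval_pow, eval_C, eval_X, eval_one,
      eval_zero, zero_mul, mul_zero, zero_add, add_zero, mul_one]
    linear_combination (-b2) * hPz + (a2 - b2 * z₀ + (2 * b2 * z₀ + b1)) * hE2
  -- degree bound
  have hHdeg : H.natDegree ≤ 2 := by
    have h : H = C (a2 ^ 2 + a2 * b1 + b0 * b2) * X ^ 2
        + C (a1 * a2 + a2 * b0 - a0 * b2 + a1 * b1 + b0 * b1) * X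
        + C (a2 * a0 + a1 * b0 + b0 ^ 2) := by
      rw [hHdef, hp, hq]; simp only [map_add, map_mul, map_pow, map_sub]; ring
    rw [h]; compute_degree
  -- H ≠ 0
  have hHne : H ≠ 0 := by
    intro hH0
    rw [hH0, mul_zero] at hkey
    have hdvd1 : q ∣ (C a2 - C b2 * X) * p ^ 2 :=
      ⟨-((C a1 - C b1 * X) * p + (C a0 - C b0 * X) * q), by linear_combination hkey⟩
    have hq_dvd : q ∣ (C a2 - C b2 * X) :=
      (hcop.symm.pow_right).dvd_of_dvd_mul_right hdvd1
    have hdvd2 : p ∣ (C a0 - C b0 * X) * q ^ 2 :=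
      ⟨-((C a2 - C b2 * X) * p + (C a1 - C b1 * X) * q), by linear_combination hkey⟩
    have hp_dvd : p ∣ (C a0 - C b0 * X) :=
      (hcop.pow_right).dvd_of_dvd_mul_right hdvd2
    have hdlin1 : (C a2 - C b2 * X).natDegree ≤ 1 := by
      have h : C a2 - C b2 * X = C (-b2) * X + C a2 := by
        simp only [map_neg]; ring
      rw [h]; compute_degree
    have hdlin2 : (C a0 - C b0 * X).natDegree ≤ 1 := by
      have h : C a0 - C b0 * X = C (-b0) * X + C a0 := by
        simp only [map_neg]; ring
      rw [h]; compute_degree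
    by_cases hu : (C a2 - C b2 * X) = 0
    · have ha2' : a2 = 0 := by
        have := congrArg (fun r => Polynomial.coeff r 0) hu; simpa using this
      have hb2' : b2 = 0 := by
        have := congrArg (fun r => Polynomial.coeff r 1) hu; simpa using this
      have hp1 : p.natDegree ≤ 1 := by
        rw [hp, ha2']; simp; compute_degree
      have hq1 : q.natDegree ≤ 1 := by
        rw [hq, hb2']; simp; compute_degree
      omega
    · have hqd : q.natDegree ≤ 1 := (Polynomial.natDegree_le_of_dvd hq_dvd hu).trans hdlin1
      by_cases hv : (C a0 - C b0 * X) = 0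
      · have ha0' : a0 = 0 := by
          have := congrArg (fun r => Polynomial.coeff r 0) hv; simpa using this
        have hb0' : b0 = 0 := by
          have := congrArg (fun r => Polynomial.coeff r 1) hv; simpa using this
        have hXp : (X : Polynomial ℂ) ∣ p :=
          ⟨C a2 * X + C a1, by rw [hp, ha0']; simp only [map_zero]; ring⟩
        have hXq : (X : Polynomial ℂ) ∣ q :=
          ⟨C b2 * X + C b1, by rw [hq, hb0']; simp only [map_zero]; ring⟩
        exact Polynomial.not_isUnit_X (hcop.isUnit_of_dvd' hXp hXq)
      · have hpd : p.natDegree ≤ 1 := (Polynomial.natDegree_le_of_dvd hp_dvd hv).trans hdlin2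
        omega
  -- any root of H is z₀
  have hroot : ∀ x : ℂ, H.eval x = 0 → x = z₀ :=
    fun x hx => only_root_of_double_root H z₀ hHne hHdeg hHval hHder x hx
  constructor
  · rintro ⟨a, b, hab, hqa, hqb, hfa, hfb⟩
    simp only at hfa hfb
    have hPa : p.eval a = b * q.eval a := by
      rw [div_eq_iff hqa] at hfa; exact hfa
    have hPb : p.eval b = a * q.eval b := by
      rw [div_eq_iff hqb] at hfb; exact hfb
    have haz : a ≠ z₀ := by
      rintro rfl
      refine hab ?_
      have h1 : p.eval a / q.eval a = a := hfix
      have h2 : p.eval a / q.eval a = b := by rw [hPa]; field_simp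
      rw [← h1, h2]
    refine haz (hroot a ?_)
    have hev := congrArg (Polynomial.eval a) hkey
    simp only [eval_add, eval_mul, eval_sub, eval_pow, eval_C, eval_X] at hev
    have hne : p.eval a - a * q.eval a ≠ 0 := by
      rw [hPa, ← sub_mul]
      exact mul_ne_zero (sub_ne_zero.mpr hab.symm) hqa
    apply mul_left_cancel₀ hne
    rw [mul_zero, ← hev]
    have hpb := hpe b
    have hqb' := hqe b
    linear_combination ((a2 - b2 * a) * (p.eval a + b * q.eval a)
        + (a1 - b1 * a) * (q.eval a)) * hPa
      + (q.eval a) ^ 2 * (hPb - hpb + a * hqb')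
  · rintro ⟨w, hqw, hcase⟩
    have hpw : p.eval w ≠ 0 := by
      intro h
      obtain ⟨u, v, huv⟩ := hcop
      have hh := congrArg (Polynomial.eval w) huv
      simp [h, hqw] at hh
    have ha2w : a2 - b2 * w = 0 := by
      rcases hcase with ⟨hlt, hw0⟩ | ⟨heqd, hlc⟩
      · have h2 : a2 = 0 := by
          rw [ha2]
          exact Polynomial.coeff_eq_zero_of_natDegree_lt (lt_of_lt_of_le hlt hq2)
        rw [h2, hw0]; ring
      · have hq2' : q.natDegree = 2 := by
          rw [heqd, max_self] at hdeg; exact hdeg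
        have hp2' : p.natDegree = 2 := heqd.trans hq2'
        have h1 : p.leadingCoeff = a2 := by
          rw [Polynomial.leadingCoeff, hp2', ha2]
        have h2 : q.leadingCoeff = b2 := by
          rw [Polynomial.leadingCoeff, hq2', hb2]
        rw [h1, h2] at hlc
        rw [hlc]; ring
    have hwz : w = z₀ := by
      refine hroot w ?_
      have hev := congrArg (Polynomial.eval w) hkey
      simp only [eval_add, eval_mul, eval_sub, eval_pow, eval_C, eval_X] at hev
      have hne : p.eval w - w * q.eval w ≠ 0 := by
        rw [hqw]; simpa using hpw
      apply mul_left_cancel₀ hne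
      rw [mul_zero, ← hev]
      linear_combination (p.eval w) ^ 2 * ha2w
        + ((a1 - b1 * w) * (p.eval w) + (a0 - b0 * w) * q.eval w) * hqw
    rw [hwz] at hqw
    exact hz₀ hqw
end

section
/- No quadratic rational map has a periodic orbit of period 2 with multiplier equal to +1. -/
open Polynomial
noncomputable section

lemma expand2 (p : ℂ[X]) (h : p.natDegree ≤ 2) :
    p = C (p.coeff 0) + C (p.coeff 1) * X + C (p.coeff 2) * X ^ 2 := by
  ext n
  rcases n with _ | _ | _ | n
  · simp
  · simp
  · simp
  · have : p.coeff (n+3) = 0 :=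
      Polynomial.coeff_eq_zero_of_natDegree_lt (lt_of_le_of_lt h (by omega))
    simp [coeff_X_pow, this]

lemma coprime_eval (p q : ℂ[X]) (hcop : IsCoprime p q) (w : ℂ) (hq : q.eval w = 0) :
    p.eval w ≠ 0 := by
  intro hp
  obtain ⟨u, v, huv⟩ := hcop
  have := congrArg (eval w) huv
  simp [hp, hq] at this

lemma aux_ne (p q : ℂ[X]) (hcop : IsCoprime p q) (hdeg : max p.natDegree q.natDegree = 2)
    (c0 c1 c2 d0 d1 d2 : ℂ)
    (hp : p = C c0 + C c1 * X + C c2 * X ^ 2) (hq : q = C d0 + C d1 * X + C d2 * X ^ 2) :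
    (C c2 * X + C c1 + C d0) * q + (C c2 - C d2 * X) * p ≠ 0 := by
  intro h0
  have hpc : p.coeff 2 = c2 := by rw [hp]; simp [coeff_X_pow, coeff_C]
  have hqc : q.coeff 2 = d2 := by rw [hq]; simp [coeff_X_pow, coeff_C]
  set A := C c2 * X + C c1 + C d0 with hA
  set B := C c2 - C d2 * X with hB
  have hpA : p ∣ A := by
    refine hcop.dvd_of_dvd_mul_right ⟨-B, ?_⟩
    linear_combination h0
  have hqB : q ∣ B := by
    refine hcop.symm.dvd_of_dvd_mul_right ⟨-A, ?_⟩
    linear_combination h0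
  have hcases : p.natDegree = 2 ∨ q.natDegree = 2 := by
    rcases max_choice p.natDegree q.natDegree with h | h <;> rw [h] at hdeg
    · exact Or.inl hdeg
    · exact Or.inr hdeg
  rcases hcases with hd | hd
  · have hp0 : p ≠ 0 := fun hh => by simp [hh] at hd
    have hc2 : c2 ≠ 0 := by
      rw [← hpc, ← hd]; exact Polynomial.leadingCoeff_ne_zero.mpr hp0
    have hAne : A ≠ 0 := by
      intro hh
      have := congrArg (fun r => Polynomial.coeff r 1) hh
      simp [hA, coeff_C] at this
      exact hc2 this
    have hle := Polynomial.natDegree_le_of_dvd hpA hAne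
    have hA1 : A.natDegree ≤ 1 := by rw [hA]; compute_degree
    omega
  · have hq0 : q ≠ 0 := fun hh => by simp [hh] at hd
    have hd2 : d2 ≠ 0 := by
      rw [← hqc, ← hd]; exact Polynomial.leadingCoeff_ne_zero.mpr hq0
    have hBne : B ≠ 0 := by
      intro hh
      have := congrArg (fun r => Polynomial.coeff r 1) hh
      simp [hB, coeff_C] at this
      exact hd2 this
    have hle := Polynomial.natDegree_le_of_dvd hqB hBne
    have hB1 : B.natDegree ≤ 1 := by rw [hB]; compute_degree
    omega


lemma core (p q : ℂ[X]) (c0 c1 c2 d0 d1 d2 a b : ℂ)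
    (hp : p = C c0 + C c1 * X + C c2 * X ^ 2) (hq : q = C d0 + C d1 * X + C d2 * X ^ 2)
    (hab : a ≠ b)
    (hqa : q.eval a ≠ 0) (hqb : q.eval b ≠ 0)
    (h1 : p.eval a = b * q.eval a) (h2 : p.eval b = a * q.eval b)
    (hM : ((derivative p).eval a * q.eval a - p.eval a * (derivative q).eval a) *
          ((derivative p).eval b * q.eval b - p.eval b * (derivative q).eval b)
          = (q.eval a * q.eval b) ^ 2) :
    eval a ((C c2 * X + C c1 + C d0) * q + (C c2 - C d2 * X) * p) = 0 ∧
    eval a (derivative ((C c2 * X + C c1 + C d0) * q + (C c2 - C d2 * X) * p)) = 0 := by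
  subst hp; subst hq
  simp only [derivative_add, derivative_mul, derivative_C, derivative_X_pow, derivative_X,
    derivative_sub, zero_mul, mul_one, add_zero, zero_add, mul_zero, sub_zero, Nat.cast_ofNat,
    pow_one, map_ofNat, eval_add, eval_sub, eval_mul, eval_pow, eval_C, eval_X, eval_ofNat,
    eval_zero, eval_one]
    at h1 h2 hM hqa hqb ⊢
  have hQa : d0 + d1*a + d2*a^2 ≠ 0 := by intro h; apply hqa; linear_combination h
  have hQb : d0 + d1*b + d2*b^2 ≠ 0 := by intro h; apply hqb; linear_combination h
  have h1' : c0 + c1*a + c2*a^2 = b * (d0 + d1*a + d2*a^2) := by linear_combination h1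
  have h2' : c0 + c1*b + c2*b^2 = a * (d0 + d1*b + d2*b^2) := by linear_combination h2
  have hM' : ((c1 + 2*c2*a)*(d0 + d1*a + d2*a^2) - (c0 + c1*a + c2*a^2)*(d1 + 2*d2*a)) * ((c1 + 2*c2*b)*(d0 + d1*b + d2*b^2) - (c0 + c1*b + c2*b^2)*(d1 + 2*d2*b))
      = ((d0 + d1*a + d2*a^2)*(d0 + d1*b + d2*b^2))^2 := by linear_combination hM
  have hne : (c0 + c1*a + c2*a^2) - a*(d0 + d1*a + d2*a^2) ≠ 0 := by
    have hx : (c0 + c1*a + c2*a^2) - a*(d0 + d1*a + d2*a^2) = (b - a)*(d0 + d1*a + d2*a^2) := by linear_combination h1'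
    rw [hx]
    exact mul_ne_zero (sub_ne_zero.mpr (Ne.symm hab)) hQa
  have hprod : ((c0 + c1*a + c2*a^2) - a*(d0 + d1*a + d2*a^2)) * ((c2*a + c1 + d0)*(d0 + d1*a + d2*a^2) + (c2 - d2*a)*(c0 + c1*a + c2*a^2)) = 0 := by
    linear_combination (d0 + d1*a + d2*a^2)^2 * h2' + ((c2 - a*d2)*((c0 + c1*a + c2*a^2) + b*(d0 + d1*a + d2*a^2)) + (c1 - a*d1)*(d0 + d1*a + d2*a^2)) * h1'
  have hSa : ((c2*a + c1 + d0)*(d0 + d1*a + d2*a^2) + (c2 - d2*a)*(c0 + c1*a + c2*a^2)) = 0 := by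
    rcases mul_eq_zero.mp hprod with h | h
    · exact absurd h hne
    · exact h
  have hT2' : ((2*c2*(c0 + c1*a + c2*a^2)*(c1 + 2*c2*a) + c1*((c1 + 2*c2*a)*(d0 + d1*a + d2*a^2) + (c0 + c1*a + c2*a^2)*(d1 + 2*d2*a)) + 2*c0*(d0 + d1*a + d2*a^2)*(d1 + 2*d2*a)) - (d2*(c0 + c1*a + c2*a^2)^2 + d1*((c0 + c1*a + c2*a^2)*(d0 + d1*a + d2*a^2)) + d0*(d0 + d1*a + d2*a^2)^2) - a*(2*d2*(c0 + c1*a + c2*a^2)*(c1 + 2*c2*a) + d1*((c1 + 2*c2*a)*(d0 + d1*a + d2*a^2) + (c0 + c1*a + c2*a^2)*(d1 + 2*d2*a)) + 2*d0*(d0 + d1*a + d2*a^2)*(d1 + 2*d2*a))) * ((d0 + d1*a + d2*a^2)^2*(d0 + d1*b + d2*b^2)) = 0 := by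
    linear_combination (d0 + d1*a + d2*a^2)^2 * hM' + (((c2*d1 - c1*d2)*((c0 + c1*a + c2*a^2) + b*(d0 + d1*a + d2*a^2)) + 2*(c2*d0 - c0*d2)*(d0 + d1*a + d2*a^2))*((c1 + 2*c2*a)*(d0 + d1*a + d2*a^2) - (c0 + c1*a + c2*a^2)*(d1 + 2*d2*a)) - (d2*((c0 + c1*a + c2*a^2) + b*(d0 + d1*a + d2*a^2)) + d1*(d0 + d1*a + d2*a^2))*((d2*(c0 + c1*a + c2*a^2)^2 + d1*((c0 + c1*a + c2*a^2)*(d0 + d1*a + d2*a^2)) + d0*(d0 + d1*a + d2*a^2)^2) + (d0 + d1*a + d2*a^2)^2*(d0 + d1*b + d2*b^2)) + (2*d2*(c0 + c1*a + c2*a^2)*(c1 + 2*c2*a) + d1*((c1 + 2*c2*a)*(d0 + d1*a + d2*a^2) + (c0 + c1*a + c2*a^2)*(d1 + 2*d2*a)) + 2*d0*(d0 + d1*a + d2*a^2)*(d1 + 2*d2*a))*((c2 - a*d2)*((c0 + c1*a + c2*a^2) + b*(d0 + d1*a + d2*a^2)) + (c1 - a*d1)*(d0 + d1*a + d2*a^2))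 - (d2*((c0 + c1*a + c2*a^2) + b*(d0 + d1*a + d2*a^2)) + d1*(d0 + d1*a + d2*a^2))*((2*c2*(c0 + c1*a + c2*a^2)*(c1 + 2*c2*a) + c1*((c1 + 2*c2*a)*(d0 + d1*a + d2*a^2) + (c0 + c1*a + c2*a^2)*(d1 + 2*d2*a)) + 2*c0*(d0 + d1*a + d2*a^2)*(d1 + 2*d2*a)) - (d2*(c0 + c1*a + c2*a^2)^2 + d1*((c0 + c1*a + c2*a^2)*(d0 + d1*a + d2*a^2)) + d0*(d0 + d1*a + d2*a^2)^2) - a*(2*d2*(c0 + c1*a + c2*a^2)*(c1 + 2*c2*a) + d1*((c1 + 2*c2*a)*(d0 + d1*a + d2*a^2) + (c0 + c1*a + c2*a^2)*(d1 + 2*d2*a)) + 2*d0*(d0 + d1*a + d2*a^2)*(d1 + 2*d2*a)))) * h1' + (d0 + d1*a + d2*a^2)^2*(2*d2*(c0 + c1*a + c2*a^2)*(c1 + 2*c2*a) + d1*((c1 + 2*c2*a)*(d0 + d1*a + d2*a^2) + (c0 + c1*a + c2*a^2)*(d1 + 2*d2*a)) + 2*d0*(d0 + d1*a + d2*a^2)*(d1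 + 2*d2*a)) * h2'
  have hT2 : (2*c2*(c0 + c1*a + c2*a^2)*(c1 + 2*c2*a) + c1*((c1 + 2*c2*a)*(d0 + d1*a + d2*a^2) + (c0 + c1*a + c2*a^2)*(d1 + 2*d2*a)) + 2*c0*(d0 + d1*a + d2*a^2)*(d1 + 2*d2*a)) - (d2*(c0 + c1*a + c2*a^2)^2 + d1*((c0 + c1*a + c2*a^2)*(d0 + d1*a + d2*a^2)) + d0*(d0 + d1*a + d2*a^2)^2) - a*(2*d2*(c0 + c1*a + c2*a^2)*(c1 + 2*c2*a) + d1*((c1 + 2*c2*a)*(d0 + d1*a + d2*a^2) + (c0 + c1*a + c2*a^2)*(d1 + 2*d2*a)) + 2*d0*(d0 + d1*a + d2*a^2)*(d1 + 2*d2*a)) = 0 := by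
    rcases mul_eq_zero.mp hT2' with h | h
    · exact h
    · exact absurd h (mul_ne_zero (pow_ne_zero 2 hQa) hQb)
  have hprod2 : ((c0 + c1*a + c2*a^2) - a*(d0 + d1*a + d2*a^2)) * (c2*(d0 + d1*a + d2*a^2) + (c2*a + c1 + d0)*(d1 + 2*d2*a) - d2*(c0 + c1*a + c2*a^2) + (c2 - d2*a)*(c1 + 2*c2*a)) = 0 := by
    linear_combination hT2 - ((c1 + 2*c2*a) - (d0 + d1*a + d2*a^2) - a*(d1 + 2*d2*a)) * hSa
  have hSpa : (c2*(d0 + d1*a + d2*a^2) + (c2*a + c1 + d0)*(d1 + 2*d2*a) - d2*(c0 + c1*a + c2*a^2) + (c2 - d2*a)*(c1 + 2*c2*a)) = 0 := by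
    rcases mul_eq_zero.mp hprod2 with h | h
    · exact absurd h hne
    · exact h
  constructor
  · linear_combination hSa
  · linear_combination hSpa


set_option maxHeartbeats 2000000

/-- No quadratic rational map f = p/q (p, q coprime of maximal degree 2) has a
period-2 orbit with multiplier +1.  For a finite orbit {a, b} ⊂ ℂ the multiplier
is (f∘f)'(a) = f'(a)·f'(b); for an orbit through ∞ (pole w with f(∞) = w) the
multiplier is computed in the chart z ↦ 1/z, i.e. as the derivative at 0 of
z ↦ 1/f(f(1/z)) (patched by its limiting value 0 at z = 0). -/
theorem no_period_two_multiplier_one (p q : Polynomial ℂ)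
    (hcop : IsCoprime p q) (hdeg : max p.natDegree q.natDegree = 2)
    (f : ℂ → ℂ) (hf : ∀ z, f z = p.eval z / q.eval z) :
    (∀ a b : ℂ, a ≠ b → q.eval a ≠ 0 → q.eval b ≠ 0 → f a = b → f b = a →
        deriv f a * deriv f b ≠ 1) ∧
    (∀ w : ℂ, q.eval w = 0 →
        ((p.natDegree < q.natDegree ∧ w = 0) ∨
         (p.natDegree = q.natDegree ∧ p.leadingCoeff = w * q.leadingCoeff)) →
        deriv (fun z => if z = 0 then (0 : ℂ) else (f (f z⁻¹))⁻¹) 0 ≠ 1) := by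
  have hple : p.natDegree ≤ 2 := le_trans (le_max_left _ _) hdeg.le
  have hqle : q.natDegree ≤ 2 := le_trans (le_max_right _ _) hdeg.le
  obtain ⟨c0, c1, c2, hpc, hp⟩ : ∃ x y z, p.coeff 2 = z ∧ p = C x + C y * X + C z * X ^ 2 :=
    ⟨_, _, _, rfl, expand2 p hple⟩
  obtain ⟨d0, d1, d2, hqc, hq⟩ : ∃ x y z, q.coeff 2 = z ∧ q = C x + C y * X + C z * X ^ 2 :=
    ⟨_, _, _, rfl, expand2 q hqle⟩
  have hfd : f = fun z => p.eval z / q.eval z := funext hf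
  have hSexp : (C c2 * X + C c1 + C d0) * q + (C c2 - C d2 * X) * p
      = C (d0*d0 + c1*d0 + c0*c2) + C (d0*d1 + c2*d0 + c1*d1 + c1*c2 - c0*d2) * X + C (d0*d2 + c2*d1 + c2*c2) * X ^ 2 := by
    rw [hp, hq]; simp only [map_add, map_mul, map_sub]; ring
  constructor
  · intro a b hab hqa hqb hfa hfb hmul
    have hda : HasDerivAt f
        (((derivative p).eval a * q.eval a - p.eval a * (derivative q).eval a) / (q.eval a)^2) a := by
      rw [hfd]; exact (p.hasDerivAt a).div (q.hasDerivAt a) hqa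
    have hdb : HasDerivAt f
        (((derivative p).eval b * q.eval b - p.eval b * (derivative q).eval b) / (q.eval b)^2) b := by
      rw [hfd]; exact (p.hasDerivAt b).div (q.hasDerivAt b) hqb
    have h1 : p.eval a = b * q.eval a := (div_eq_iff hqa).mp ((hf a).symm.trans hfa)
    have h2 : p.eval b = a * q.eval b := (div_eq_iff hqb).mp ((hf b).symm.trans hfb)
    rw [hda.deriv, hdb.deriv] at hmul
    have hM : ((derivative p).eval a * q.eval a - p.eval a * (derivative q).eval a) *
          ((derivative p).eval b * q.eval b - p.eval b * (derivative q).eval b)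
          = (q.eval a * q.eval b) ^ 2 := by
      field_simp at hmul
      linear_combination hmul
    obtain ⟨A1, A2⟩ := core p q c0 c1 c2 d0 d1 d2 a b hp hq hab hqa hqb h1 h2 hM
    obtain ⟨B1, B2⟩ := core p q c0 c1 c2 d0 d1 d2 b a hp hq (Ne.symm hab) hqb hqa h2 h1
      (by linear_combination hM)
    rw [hSexp] at A1 A2 B1 B2
    simp only [derivative_add, derivative_mul, derivative_C, derivative_X_pow, derivative_X,
      zero_mul, mul_one, add_zero, zero_add, mul_zero, sub_zero, Nat.cast_ofNat, pow_one,
      map_ofNat, eval_add, eval_mul, eval_pow, eval_C, eval_X, eval_ofNat, eval_zero,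
      eval_one] at A1 A2 B1 B2
    have hs2 : (d0*d2 + c2*d1 + c2*c2) = 0 := by
      rcases mul_eq_zero.mp (show (2*(d0*d2 + c2*d1 + c2*c2))*(a-b) = 0 by linear_combination A2 - B2) with h | h
      · linear_combination h/2
      · exact absurd (sub_eq_zero.mp h) hab
    have hs1 : (d0*d1 + c2*d0 + c1*d1 + c1*c2 - c0*d2) = 0 := by linear_combination A2 - 2*a*hs2
    have hs0 : (d0*d0 + c1*d0 + c0*c2) = 0 := by linear_combination A1 - a*hs1 - a^2*hs2
    refine aux_ne p q hcop hdeg c0 c1 c2 d0 d1 d2 hp hq ?_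
    rw [hSexp, hs0, hs1, hs2]
    simp
  · intro w hw hcase hone
    -- structural facts
    have hq2 : q.natDegree = 2 := by
      rcases hcase with ⟨hlt, _⟩ | ⟨heq, _⟩
      · have := max_eq_right hlt.le; omega
      · rw [heq, max_self] at hdeg; exact hdeg
    have hq0 : q ≠ 0 := fun hh => by simp [hh] at hq2
    have hd2 : d2 ≠ 0 := by
      rw [← hqc, ← hq2]; exact Polynomial.leadingCoeff_ne_zero.mpr hq0
    have hc2w : c2 = w * d2 := by
      rcases hcase with ⟨hlt, hw0⟩ | ⟨heq, hlc⟩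
      · rw [hw0, zero_mul, ← hpc]
        exact coeff_eq_zero_of_natDegree_lt (by omega)
      · have hp2 : p.natDegree = 2 := by omega
        rw [← hpc, ← hp2, Polynomial.coeff_natDegree, hlc, ← hqc, ← hq2,
          Polynomial.coeff_natDegree]
    have hpw : p.eval w ≠ 0 := coprime_eval p q hcop w hw
    have hwe : d0 + d1*w + d2*w^2 = 0 := by
      rw [hq] at hw
      simp only [eval_add, eval_sub, eval_mul, eval_pow, eval_C, eval_X, eval_zero, eval_one, eval_ofNat] at hw
      linear_combination hw
    have hpwe : (c0 + c1*w + c2*w^2) ≠ 0 := by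
      intro h; apply hpw; rw [hp]
      simp only [eval_add, eval_sub, eval_mul, eval_pow, eval_C, eval_X, eval_zero, eval_one, eval_ofNat]
      linear_combination h
    -- scalar key fact K1
    have K1s : d2*(c2*c2) + d1*(c2*d2) + d0*(d2*d2) = 0 := by
      linear_combination d2^2*hwe + (d2*c2 + w*d2^2 + d1*d2)*hc2w
    have hNT0 : eval 0 (C d2*(C c2 + C c1 * X + C c0 * X ^ 2)^2 + C d1*((C c2 + C c1 * X + C c0 * X ^ 2)*(C d2 + C d1 * X + C d0 * X ^ 2)) + C d0*(C d2 + C d1 * X + C d0 * X ^ 2)^2) = 0 := by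
      simp only [eval_add, eval_sub, eval_mul, eval_pow, eval_C, eval_X, eval_zero, eval_one, eval_ofNat]
      linear_combination K1s
    have hDT0 : eval 0 (C c2*(C c2 + C c1 * X + C c0 * X ^ 2)^2 + C c1*((C c2 + C c1 * X + C c0 * X ^ 2)*(C d2 + C d1 * X + C d0 * X ^ 2)) + C c0*(C d2 + C d1 * X + C d0 * X ^ 2)^2) = d2^2*(c0 + c1*w + c2*w^2) := by
      simp only [eval_add, eval_sub, eval_mul, eval_pow, eval_C, eval_X, eval_zero, eval_one, eval_ofNat]
      linear_combination (c2*(c2+w*d2)+c1*d2)*hc2w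
    have hDT0ne : eval 0 (C c2*(C c2 + C c1 * X + C c0 * X ^ 2)^2 + C c1*((C c2 + C c1 * X + C c0 * X ^ 2)*(C d2 + C d1 * X + C d0 * X ^ 2)) + C c0*(C d2 + C d1 * X + C d0 * X ^ 2)^2) ≠ 0 := by
      rw [hDT0]; exact mul_ne_zero (pow_ne_zero 2 hd2) hpwe
    -- the chart function agrees with NT/DT near 0
    have hev : ∀ᶠ z in nhds (0:ℂ), eval z (C d2 + C d1 * X + C d0 * X ^ 2) ≠ 0 := by
      apply ContinuousAt.eventually_ne
      · exact (Polynomial.continuous (C d2 + C d1 * X + C d0 * X ^ 2)).continuousAt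
      · simp only [eval_add, eval_sub, eval_mul, eval_pow, eval_C, eval_X, eval_zero, eval_one, eval_ofNat]
        simpa using hd2
    have heqf : (fun z => if z = 0 then (0:ℂ) else (f (f z⁻¹))⁻¹)
        =ᶠ[nhds 0] fun z => eval z (C d2*(C c2 + C c1 * X + C c0 * X ^ 2)^2 + C d1*((C c2 + C c1 * X + C c0 * X ^ 2)*(C d2 + C d1 * X + C d0 * X ^ 2)) + C d0*(C d2 + C d1 * X + C d0 * X ^ 2)^2) / eval z (C c2*(C c2 + C c1 * X + C c0 * X ^ 2)^2 + C c1*((C c2 + C c1 * X + C c0 * X ^ 2)*(C d2 + C d1 * X + C d0 * X ^ 2)) + C c0*(C d2 + C d1 * X + C d0 * X ^ 2)^2) := by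
      filter_upwards [hev] with z hz
      by_cases hz0 : z = 0
      · subst hz0
        rw [if_pos rfl, hNT0, zero_div]
      · rw [if_neg hz0]
        have hz2 : z^2 ≠ 0 := pow_ne_zero 2 hz0
        have hQTz : (d2 + d1*z + d0*z^2) ≠ 0 := by
          intro h; apply hz
          simp only [eval_add, eval_sub, eval_mul, eval_pow, eval_C, eval_X, eval_zero, eval_one, eval_ofNat]
          linear_combination h
        have hp1 : eval z⁻¹ p = (c2 + c1*z + c0*z^2)/z^2 := by
          rw [hp]; simp only [eval_add, eval_sub, eval_mul, eval_pow, eval_C, eval_X, eval_zero, eval_one, eval_ofNat]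
          field_simp
          ring
        have hq1 : eval z⁻¹ q = (d2 + d1*z + d0*z^2)/z^2 := by
          rw [hq]; simp only [eval_add, eval_sub, eval_mul, eval_pow, eval_C, eval_X, eval_zero, eval_one, eval_ofNat]
          field_simp
          ring
        have hu : f z⁻¹ = (c2 + c1*z + c0*z^2)/(d2 + d1*z + d0*z^2) := by
          rw [hf, hp1, hq1, div_div_div_comm, div_self hz2, div_one]
        have hp2 : eval ((c2 + c1*z + c0*z^2)/(d2 + d1*z + d0*z^2)) p = (c2*(c2 + c1*z + c0*z^2)^2 + c1*((c2 + c1*z + c0*z^2)*(d2 + d1*z + d0*z^2)) + c0*(d2 + d1*z + d0*z^2)^2)/(d2 + d1*z + d0*z^2)^2 := by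
          rw [hp]; simp only [eval_add, eval_sub, eval_mul, eval_pow, eval_C, eval_X, eval_zero, eval_one, eval_ofNat]
          generalize d2 + d1*z + d0*z^2 = D at hQTz ⊢
          field_simp
          ring
        have hq2' : eval ((c2 + c1*z + c0*z^2)/(d2 + d1*z + d0*z^2)) q = (d2*(c2 + c1*z + c0*z^2)^2 + d1*((c2 + c1*z + c0*z^2)*(d2 + d1*z + d0*z^2)) + d0*(d2 + d1*z + d0*z^2)^2)/(d2 + d1*z + d0*z^2)^2 := by
          rw [hq]; simp only [eval_add, eval_sub, eval_mul, eval_pow, eval_C, eval_X, eval_zero, eval_one, eval_ofNat]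
          generalize d2 + d1*z + d0*z^2 = D at hQTz ⊢
          field_simp
          ring
        have hNTz : eval z (C d2*(C c2 + C c1 * X + C c0 * X ^ 2)^2 + C d1*((C c2 + C c1 * X + C c0 * X ^ 2)*(C d2 + C d1 * X + C d0 * X ^ 2)) + C d0*(C d2 + C d1 * X + C d0 * X ^ 2)^2) = (d2*(c2 + c1*z + c0*z^2)^2 + d1*((c2 + c1*z + c0*z^2)*(d2 + d1*z + d0*z^2)) + d0*(d2 + d1*z + d0*z^2)^2) := by
          simp only [eval_add, eval_sub, eval_mul, eval_pow, eval_C, eval_X, eval_zero, eval_one, eval_ofNat]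
        have hDTz : eval z (C c2*(C c2 + C c1 * X + C c0 * X ^ 2)^2 + C c1*((C c2 + C c1 * X + C c0 * X ^ 2)*(C d2 + C d1 * X + C d0 * X ^ 2)) + C c0*(C d2 + C d1 * X + C d0 * X ^ 2)^2) = (c2*(c2 + c1*z + c0*z^2)^2 + c1*((c2 + c1*z + c0*z^2)*(d2 + d1*z + d0*z^2)) + c0*(d2 + d1*z + d0*z^2)^2) := by
          simp only [eval_add, eval_sub, eval_mul, eval_pow, eval_C, eval_X, eval_zero, eval_one, eval_ofNat]
        rw [hu, hf, inv_div, hp2, hq2', div_div_div_comm, div_self (pow_ne_zero 2 hQTz),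
          div_one, hNTz, hDTz]
    -- compute the derivative
    have hdiv : HasDerivAt (fun z => eval z (C d2*(C c2 + C c1 * X + C c0 * X ^ 2)^2 + C d1*((C c2 + C c1 * X + C c0 * X ^ 2)*(C d2 + C d1 * X + C d0 * X ^ 2)) + C d0*(C d2 + C d1 * X + C d0 * X ^ 2)^2) / eval z (C c2*(C c2 + C c1 * X + C c0 * X ^ 2)^2 + C c1*((C c2 + C c1 * X + C c0 * X ^ 2)*(C d2 + C d1 * X + C d0 * X ^ 2)) + C c0*(C d2 + C d1 * X + C d0 * X ^ 2)^2))
        ((eval 0 (derivative (C d2*(C c2 + C c1 * X + C c0 * X ^ 2)^2 + C d1*((C c2 + C c1 * X + C c0 * X ^ 2)*(C d2 + C d1 * X + C d0 * X ^ 2)) + C d0*(C d2 + C d1 * X + C d0 * X ^ 2)^2)) * eval 0 (C c2*(C c2 + C c1 * X + C c0 * X ^ 2)^2 + C c1*((C c2 + C c1 * X + C c0 * X ^ 2)*(C d2 + C d1 * X + C d0 * X ^ 2)) + C c0*(C d2 + C d1 * X + C d0 * X ^ 2)^2) - eval 0 (C d2*(C c2 + C c1 * X + C c0 * X ^ 2)^2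 + C d1*((C c2 + C c1 * X + C c0 * X ^ 2)*(C d2 + C d1 * X + C d0 * X ^ 2)) + C d0*(C d2 + C d1 * X + C d0 * X ^ 2)^2) * eval 0 (derivative (C c2*(C c2 + C c1 * X + C c0 * X ^ 2)^2 + C c1*((C c2 + C c1 * X + C c0 * X ^ 2)*(C d2 + C d1 * X + C d0 * X ^ 2)) + C c0*(C d2 + C d1 * X + C d0 * X ^ 2)^2)))
          / (eval 0 (C c2*(C c2 + C c1 * X + C c0 * X ^ 2)^2 + C c1*((C c2 + C c1 * X + C c0 * X ^ 2)*(C d2 + C d1 * X + C d0 * X ^ 2)) + C c0*(C d2 + C d1 * X + C d0 * X ^ 2)^2))^2) 0 :=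
      HasDerivAt.div ((C d2*(C c2 + C c1 * X + C c0 * X ^ 2)^2 + C d1*((C c2 + C c1 * X + C c0 * X ^ 2)*(C d2 + C d1 * X + C d0 * X ^ 2)) + C d0*(C d2 + C d1 * X + C d0 * X ^ 2)^2).hasDerivAt 0) ((C c2*(C c2 + C c1 * X + C c0 * X ^ 2)^2 + C c1*((C c2 + C c1 * X + C c0 * X ^ 2)*(C d2 + C d1 * X + C d0 * X ^ 2)) + C c0*(C d2 + C d1 * X + C d0 * X ^ 2)^2).hasDerivAt 0) hDT0ne
    rw [heqf.deriv_eq, hdiv.deriv, div_eq_one_iff_eq (pow_ne_zero 2 hDT0ne)] at hone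
    rw [hNT0, zero_mul, sub_zero, hDT0] at hone
    simp only [derivative_add, derivative_sub, derivative_mul, derivative_C, derivative_X_pow, derivative_X, derivative_pow, derivative_one, zero_mul, mul_one, add_zero, zero_add, mul_zero, sub_zero, Nat.cast_ofNat, pow_one, map_ofNat, eval_add, eval_sub, eval_mul, eval_pow, eval_C, eval_X, eval_zero, eval_one, eval_ofNat] at hone
    -- extract the multiplier equation K2
    have K2s : (2*d2*c2*c1 + d1*(c1*d2 + c2*d1) + 2*d0*d2*d1) - (c2*(c2*c2) + c1*(c2*d2) + c0*(d2*d2)) = 0 := by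
      have hcan : ∀ x y : ℂ, x * (d2^2*(c0 + c1*w + c2*w^2)) = (d2^2*(c0 + c1*w + c2*w^2))^2 → y = d2^2*(c0 + c1*w + c2*w^2) → x - y = 0 := by
        intro x y hx hy
        have : x = d2^2*(c0 + c1*w + c2*w^2) := by
          apply mul_right_cancel₀ (mul_ne_zero (pow_ne_zero 2 hd2) hpwe)
          rw [hx]; ring
        rw [this, hy]; ring
      refine hcan _ _ ?_ ?_
      · linear_combination hone
      · linear_combination (c2*(c2+w*d2)+c1*d2)*hc2w
    -- coefficients of S vanish
    have hs2 : (d0*d2 + c2*d1 + c2*c2) = 0 := by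
      rcases mul_eq_zero.mp (show d2 * (d0*d2 + c2*d1 + c2*c2) = 0 by linear_combination K1s) with h | h
      · exact absurd h hd2
      · exact h
    have hs1 : (d0*d1 + c2*d0 + c1*d1 + c1*c2 - c0*d2) = 0 := by
      rcases mul_eq_zero.mp (show d2 * (d0*d1 + c2*d0 + c1*d1 + c1*c2 - c0*d2) = 0 by linear_combination K2s - (d1 - c2)*hs2) with h | h
      · exact absurd h hd2
      · exact h
    have hs0 : (d0*d0 + c1*d0 + c0*c2) = 0 := by
      rcases mul_eq_zero.mp (show (c0 + c1*w + c2*w^2) * (d0*d0 + c1*d0 + c0*c2) = 0 by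
        linear_combination (c1*(c0 + c1*w + c2*w^2) + c0*(d0 + d1*w + d2*w^2) - w*d1*(c0 + c1*w + c2*w^2) - w*d0*(d0 + d1*w + d2*w^2) + w*((d0*d0 + c1*d0 + c0*c2) + (d0*d1 + c2*d0 + c1*d1 + c1*c2 - c0*d2)*w + (d0*d2 + c2*d1 + c2*c2)*w^2))*hwe + (c0 + c1*w + c2*w^2)^2*hc2w + (-w*(c0 + c1*w + c2*w^2))*hs1 + (-(w^2)*(c0 + c1*w + c2*w^2))*hs2) with h | h
      · exact absurd h hpwe
      · exact h
    refine aux_ne p q hcop hdeg c0 c1 c2 d0 d1 d2 hp hq ?_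
    rw [hSexp, hs0, hs1, hs2]
    simp
end
end

section
/- For α, β, γ, δ ∈ ℂ with αδ − βγ = 1, set A = αδ, B = α³β, C = γδ³. Then A³(A−1) = BC. Conversely, given (A, B, C) ∈ ℂ³ with A³(A−1) = BC and (A, B, C) ≠ (0,0,0), there exist α, β, γ, δ with αδ − βγ = 1 realizing these invariants. -/
/-- For a unimodular coefficient matrix (αδ − βγ = 1) the invariants A = αδ,
B = α³β, C = γδ³ satisfy A³(A−1) = BC; conversely every (A,B,C) ≠ (0,0,0) on
this hypersurface is realized by some unimodular (α,β,γ,δ). -/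
theorem marked_moduli_hypersurface :
    (∀ α β γ δ : ℂ, α * δ - β * γ = 1 →
      (α * δ) ^ 3 * (α * δ - 1) = (α ^ 3 * β) * (γ * δ ^ 3)) ∧
    (∀ A B C : ℂ, A ^ 3 * (A - 1) = B * C → (A, B, C) ≠ (0, 0, 0) →
      ∃ α β γ δ : ℂ, α * δ - β * γ = 1 ∧
        A = α * δ ∧ B = α ^ 3 * β ∧ C = γ * δ ^ 3) := by
  constructor
  · intro α β γ δ h
    have hb : α * δ - 1 = β * γ := by linear_combination h
    rw [hb]; ring
  · intro A B C h hne
    by_cases hB : B = 0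
    · by_cases hC : C = 0
      · -- then A ≠ 0 and A³(A-1)=0, so A = 1
        have hA : A ≠ 0 := by
          intro hA0; exact hne (by simp [hA0, hB, hC])
        have hA1 : A = 1 := by
          have : A ^ 3 * (A - 1) = 0 := by rw [h, hB, hC]; ring
          rcases mul_eq_zero.1 this with h1 | h1
          · exact absurd (pow_eq_zero_iff (by norm_num) |>.1 h1) hA
          · exact sub_eq_zero.1 h1
        exact ⟨1, 0, 0, 1, by ring, by simp [hA1], by simp [hB], by simp [hC]⟩
      · -- C ≠ 0: take δ = 1, α = A, γ = C, β = (A-1)/C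
        refine ⟨A, (A - 1) / C, C, 1, ?_, by ring, ?_, by ring⟩
        · field_simp; ring
        · rw [hB] at h
          have h0 : A ^ 3 * (A - 1) = 0 := by linear_combination h
          rw [hB, eq_comm, mul_div_assoc', div_eq_zero_iff]
          exact Or.inl h0
    · -- B ≠ 0: α = 1, δ = A, β = B, γ = (A-1)/B
      refine ⟨1, B, (A - 1) / B, A, ?_, by ring, by ring, ?_⟩
      · field_simp; ring
      · field_simp
        linear_combination -h
end
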